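/- The isolation number of the cycle C_n on n ≥ 3 vertices equals ⌈n/4⌉. -/

import Mathlib

open SimpleGraph

/-- `v` lies in the closed neighbourhood of the set `D`. -/
def inClosedNbhd {V : Type*} (G : SimpleGraph V) (D : Set V) (v : V) : Prop :=
  ∃ d ∈ D, d = v ∨ G.Adj d v

/-- `D` is an isolating set of `G`: the graph induced on the vertices outside
`N[D]` has no edges. -/
def IsIsolating {V : Type*} (G : SimpleGraph V) (D : Set V) : Prop :=
  ∀ u v : V, G.Adj u v → inClosedNbhd G D u ∨ inClosedNbhd G D v

/-- The isolation number of a finite graph. -/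
noncomputable def iso {V : Type*} (G : SimpleGraph V) [Fintype V] : ℕ :=
  sInf {n | ∃ D : Finset V, D.card = n ∧ IsIsolating G ↑D}

/-- The graph obtained from `G` by subdividing each edge in `A` once; the new
(subdivision) vertices are the elements of `A`. -/
def subdivide {V : Type*} (G : SimpleGraph V) (A : Finset (Sym2 V)) :
    SimpleGraph (V ⊕ {e : Sym2 V // e ∈ A}) where
  Adj x y :=
    match x, y with
    | Sum.inl u, Sum.inl v => G.Adj u v ∧ s(u, v) ∉ A
    | Sum.inl u, Sum.inr e => u ∈ (e : Sym2 V)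
    | Sum.inr e, Sum.inl u => u ∈ (e : Sym2 V)
    | Sum.inr _, Sum.inr _ => False
  symm := by
    constructor
    rintro (u | e) (v | f) h <;> dsimp only at h ⊢ <;>
      first
        | exact ⟨h.1.symm, by rw [Sym2.eq_swap]; exact h.2⟩
        | exact h
        | exact h.elim
  loopless := by
    constructor
    rintro (u | e) h <;> dsimp only at h <;>
      first
        | exact G.irrefl h.1
        | exact h

/-- A graph is `(ι,q)`-critical. -/
def IotaCritical {V : Type*} (G : SimpleGraph V) [Fintype V] (q : ℕ) : Prop :=
  (∀ A : Finset (Sym2 V), ↑A ⊆ G.edgeSet → A.card = q →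
      iso G < iso (subdivide G A)) ∧
  (∃ A : Finset (Sym2 V), ↑A ⊆ G.edgeSet ∧ A.card = q - 1 ∧
      iso (subdivide G A) = iso G)

/-!
An isolating set `D` of `C_n` meets every four consecutive vertices `v, …, v + 3`, since
otherwise the edge `{v + 1, v + 2}` lies outside `N[D]`. So the translates `D, D - 1, D - 2, D - 3`
cover `C_n`, and `n ≤ 4 |D|`. Conversely, the `⌈n/4⌉` vertices with index divisible by `4` isolate
`C_n`: every vertex whose index is not `2 mod 4` lies in `N[D]` (the last vertex through its
neighbour `0`), and no edge joins two vertices of index `2 mod 4`.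
-/

open Finset Fin.NatCast Fin.CommRing

section IsolationNumber

variable {V : Type*} (G : SimpleGraph V)

lemma isIsolating_univ : IsIsolating G Set.univ :=
  fun u _ _ => Or.inl (Exists.intro u ⟨trivial, Or.inl rfl⟩)

variable [Fintype V]

lemma iso_le_card {D : Finset V} (hD : IsIsolating G D) : iso G ≤ #D :=
  Nat.sInf_le ⟨D, rfl, hD⟩

lemma exists_isIsolating_card_eq_iso : ∃ D : Finset V, #D = iso G ∧ IsIsolating G D :=
  Nat.sInf_mem (s := {k | ∃ D : Finset V, #D = k ∧ IsIsolating G D})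
    ⟨_, univ, rfl, by simpa using isIsolating_univ G⟩

end IsolationNumber

section Cycle

variable {n : ℕ}

lemma inClosedNbhd_cycleGraph_iff {D : Set (Fin (n + 2))} {u : Fin (n + 2)} :
    inClosedNbhd (cycleGraph (n + 2)) D u ↔ u ∈ D ∨ u - 1 ∈ D ∨ u + 1 ∈ D := by
  simp only [inClosedNbhd, adj_comm _ _ u, ← mem_neighborSet, cycleGraph_neighborSet,
    Set.mem_insert_iff, Set.mem_singleton_iff, and_or_left, exists_or, exists_eq_right]

lemma IsIsolating.exists_add_mem_of_cycleGraph {D : Set (Fin (n + 2))}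
    (hD : IsIsolating (cycleGraph (n + 2)) D) (v : Fin (n + 2)) :
    ∃ i : ℕ, i < 4 ∧ v + i ∈ D := by
  have hedge : (cycleGraph (n + 2)).Adj (v + 1) (v + 2) := cycleGraph_adj.2 (Or.inr (by ring))
  rcases hD _ _ hedge with h | h <;> rw [inClosedNbhd_cycleGraph_iff] at h
  · rcases h with h | h | h
    · exact ⟨1, by norm_num, by simpa using h⟩
    · exact ⟨0, by norm_num, by simpa using h⟩
    · exact ⟨2, by norm_num, by convert h using 1; ring⟩
  · rcases h with h | h | h
    · exact ⟨2, by norm_num, by simpa using h⟩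
    · exact ⟨1, by norm_num, by convert h using 1; ring⟩
    · exact ⟨3, by norm_num, by convert h using 1; ring⟩

lemma IsIsolating.le_four_mul_card_of_cycleGraph {D : Finset (Fin (n + 2))}
    (hD : IsIsolating (cycleGraph (n + 2)) D) : n + 2 ≤ 4 * #D := by
  have hcover : (univ : Finset (Fin (n + 2))) ⊆
      D.biUnion fun d => (range 4).image fun i : ℕ => d - i := by
    intro v _
    obtain ⟨i, hi, hvi⟩ := hD.exists_add_mem_of_cycleGraph v
    exact mem_biUnion.2 ⟨_, hvi, mem_image.2 ⟨i, mem_range.2 hi, add_sub_cancel_right _ _⟩⟩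
  calc n + 2 = #(univ : Finset (Fin (n + 2))) := by simp
    _ ≤ #D * 4 := (card_le_card hcover).trans <|
      card_biUnion_le_card_mul _ _ _ fun _ _ => card_image_le.trans (card_range 4).le
    _ = 4 * #D := mul_comm _ _

def multiplesOfFour (n : ℕ) : Finset (Fin n) := {v | (v : ℕ) % 4 = 0}

lemma card_multiplesOfFour (n : ℕ) : #(multiplesOfFour n) = (n + 3) / 4 := by
  have h := Nat.count_modEq_card n (r := 4) (by norm_num) 0
  rw [Nat.count_eq_card_filter_range] at h
  have hval : #(multiplesOfFour n) = #{x ∈ range n | x ≡ 0 [MOD 4]} := by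
    rw [multiplesOfFour, ← card_map Fin.valEmbedding, map_filter', Fin.map_valEmbedding_univ]
    congr 1
    ext x
    simp only [mem_filter, mem_Iio, mem_range, Fin.valEmbedding_apply]
    exact ⟨fun ⟨hx, a, ha, hax⟩ => ⟨hx, hax ▸ ha⟩, fun ⟨hx, hx4⟩ => ⟨hx, ⟨x, hx⟩, hx4, rfl⟩⟩
  rw [hval, h]
  split_ifs <;> omega

lemma inClosedNbhd_multiplesOfFour {u : Fin (n + 2)} (hu : (u : ℕ) % 4 ≠ 2) :
    inClosedNbhd (cycleGraph (n + 2)) (multiplesOfFour (n + 2) : Set (Fin (n + 2))) u := by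
  rw [inClosedNbhd_cycleGraph_iff]
  simp only [multiplesOfFour, coe_filter, mem_univ, true_and, Set.mem_ofPred_eq]
  rw [Fin.coe_sub_one, Fin.val_add_one]
  split_ifs <;> simp only [Fin.ext_iff, Fin.val_zero, Fin.val_last, Nat.zero_mod, or_true] at *
    <;> omega

lemma isIsolating_multiplesOfFour :
    IsIsolating (cycleGraph (n + 2)) (multiplesOfFour (n + 2) : Set (Fin (n + 2))) := by
  have hresidue : ∀ u : Fin (n + 2), (u : ℕ) % 4 ≠ 2 ∨ ((u + 1 : Fin (n + 2)) : ℕ) % 4 ≠ 2 := by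
    intro u
    rw [Fin.val_add_one]
    split_ifs <;> omega
  intro u v huv
  rcases cycleGraph_adj.1 huv with h | h
  · rw [sub_eq_iff_eq_add'] at h
    subst h
    exact (hresidue v).symm.imp inClosedNbhd_multiplesOfFour inClosedNbhd_multiplesOfFour
  · rw [sub_eq_iff_eq_add'] at h
    subst h
    exact (hresidue u).imp inClosedNbhd_multiplesOfFour inClosedNbhd_multiplesOfFour

end Cycle

theorem stmt3 (n : ℕ) (hn : 3 ≤ n) :
    iso (SimpleGraph.cycleGraph n) = (n + 3) / 4 := by
  obtain ⟨m, rfl⟩ : ∃ m, n = m + 2 := ⟨n - 2, by omega⟩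
  refine le_antisymm ?_ ?_
  · simpa [card_multiplesOfFour] using iso_le_card _ isIsolating_multiplesOfFour
  · obtain ⟨D, hcard, hD⟩ := exists_isIsolating_card_eq_iso (cycleGraph (m + 2))
    have := hD.le_four_mul_card_of_cycleGraph
    omega
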